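/- Let χ be a Dirichlet character modulo Q and let s = σ + it with σ > 1. Then |L(s, χ)| ≥ ζ(2σ)/ζ(σ); equivalently, log|L(s, χ)| ≥ log ζ(2σ) − log ζ(σ). -/

import Mathlib

/-!
Compare Euler factors. With `x = p ^ (-σ)` we have `‖χ p * p ^ (-s)‖ ≤ x`, so
`‖1 - χ p * p ^ (-s)‖ ≤ 1 + x` and hence
`(1 - x ^ 2)⁻¹ = (1 + x)⁻¹ * (1 - x)⁻¹ ≤ ‖1 - χ p * p ^ (-s)‖⁻¹ * (1 - x)⁻¹`.
Multiplying over the primes, the left side is the Euler product of `ζ(2σ)` and the right side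
that of `‖L(s, χ)‖ * ζ(σ)`.
-/

open Filter Topology Nat Complex

lemma inv_one_sub_sq_le_norm_inv_mul {x : ℝ} {z : ℂ} (hz : ‖z‖ ≤ x) (hx : x < 1) :
    (1 - x ^ 2)⁻¹ ≤ ‖1 - z‖⁻¹ * (1 - x)⁻¹ := by
  have hlower : 1 - x ≤ ‖1 - z‖ := by
    have := norm_sub_norm_le (1 : ℂ) z
    rw [norm_one] at this
    linarith
  have hupper : ‖1 - z‖ ≤ 1 + x := by
    have := norm_sub_le (1 : ℂ) z
    rw [norm_one] at this
    linarith
  have hx0 : 0 < 1 - x := by linarith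
  rw [show 1 - x ^ 2 = (1 + x) * (1 - x) by ring, mul_inv]
  gcongr
  linarith

lemma natCast_cpow_neg_ofReal (n : ℕ) (u : ℝ) :
    (n : ℂ) ^ (-(u : ℂ)) = (((n : ℝ) ^ (-u) : ℝ) : ℂ) := by
  rw [ofReal_cpow n.cast_nonneg]
  push_cast
  rfl

lemma tendsto_norm_prod {ι R : Type*} [SeminormedCommRing R] [NormMulClass R] [NormOneClass R]
    {f : ι → R} {F : ℕ → Finset ι} {a : R}
    (h : Tendsto (fun n ↦ ∏ i ∈ F n, f i) atTop (𝓝 a)) :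
    Tendsto (fun n ↦ ∏ i ∈ F n, ‖f i‖) atTop (𝓝 ‖a‖) := by
  simpa only [norm_prod] using h.norm

open scoped ComplexOrder in
lemma riemannZeta_re_eq_norm {u : ℝ} (hu : 1 < u) : (riemannZeta u).re = ‖riemannZeta u‖ :=
  re_eq_norm.mpr (riemannZeta_pos_of_one_lt hu).le

theorem norm_riemannZeta_two_mul_re_le {N : ℕ} (χ : DirichletCharacter ℂ N) {s : ℂ}
    (hs : 1 < s.re) :
    ‖riemannZeta (2 * s.re : ℝ)‖ ≤ ‖LSeries (χ ·) s‖ * ‖riemannZeta s.re‖ := by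
  have hs2 : 1 < ((2 * s.re : ℝ) : ℂ).re := by rw [ofReal_re]; linarith
  have hs1 : 1 < (s.re : ℂ).re := by simpa using hs
  refine le_of_tendsto_of_tendsto' (tendsto_norm_prod (riemannZeta_eulerProduct hs2))
    ((tendsto_norm_prod (χ.LSeries_eulerProduct hs)).mul
      (tendsto_norm_prod (riemannZeta_eulerProduct hs1))) fun n ↦ ?_
  rw [← Finset.prod_mul_distrib]
  refine Finset.prod_le_prod (fun _ _ ↦ norm_nonneg _) fun p hmem ↦ ?_
  have hp := Nat.prime_of_mem_primesBelow hmem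
  have hp1 : 1 < (p : ℝ) := by exact_mod_cast hp.one_lt
  set x := (p : ℝ) ^ (-s.re)
  have hx1 : x < 1 := Real.rpow_lt_one_of_one_lt_of_neg hp1 (by linarith)
  have hsq : (p : ℝ) ^ (-(2 * s.re)) = x ^ 2 := by
    rw [← Real.rpow_natCast, ← Real.rpow_mul (by linarith)]
    ring_nf
  have hz : ‖χ p * (p : ℂ) ^ (-s)‖ ≤ x := by
    rw [norm_mul, norm_natCast_cpow_of_pos hp.pos, neg_re]
    exact mul_le_of_le_one_left (by positivity) (χ.norm_le_one _)
  simp only [natCast_cpow_neg_ofReal, hsq, norm_inv]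
  have hnorm (r : ℝ) (hr : r < 1) : ‖1 - (r : ℂ)‖ = 1 - r := by
    rw [← ofReal_one, ← ofReal_sub, norm_real, Real.norm_of_nonneg (by linarith)]
  rw [hnorm _ (by nlinarith [show 0 < x by positivity]), hnorm _ hx1]
  exact inv_one_sub_sq_le_norm_inv_mul hz hx1

theorem stmt_9 {Q : ℕ} [NeZero Q] (χ : DirichletCharacter ℂ Q) (σ t : ℝ) (hσ : 1 < σ) :
    (riemannZeta ((2 * σ : ℝ) : ℂ)).re / (riemannZeta ((σ : ℝ) : ℂ)).re ≤
      ‖DirichletCharacter.LFunction χ ((σ : ℂ) + t * Complex.I)‖ := by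
  have hre : ((σ : ℂ) + t * I).re = σ := by simp
  rw [div_le_iff₀ (riemannZeta_re_pos_of_one_lt hσ), riemannZeta_re_eq_norm (by linarith),
    riemannZeta_re_eq_norm hσ, χ.LFunction_eq_LSeries (by rwa [hre])]
  simpa only [hre] using norm_riemannZeta_two_mul_re_le χ (s := σ + t * I) (by rwa [hre])
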